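/- arXiv:1912.11825 — 5 statements merged into one kernel-verified Lean document; each statement's English description precedes it below -/
import Mathlib

section
/- Let d ≥ 1 be an integer, let α be a real number with α > d, and let ε_1, …, ε_d be real numbers with 0 < ε_j < 1 for every j. Then the function r = (r_1, …, r_d) ↦ 1 / ( (∏_{j=1}^d r_j) · (log ∏_{j=1}^d (1/r_j))^α ) is integrable with respect to Lebesgue measure on the open box ∏_{j=1}^d (0, ε_j) ⊆ ℝ^d; in other words ∫_0^{ε_d} ⋯ ∫_0^{ε_1} dr / ( ∏_{j=1}^d r_j · log^α ∏_{j=1}^d (1/r_j) ) < ∞. -/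
/-!
Put `β = α / d > 1`. Since `-log r_j ≤ ∑ -log r_i = log ∏ 1/r_i` for every `j`, the product
`∏ (-log r_j)^β` is at most `(log ∏ 1/r_j)^α`, so the integrand is dominated by the tensor product
`∏ 1 / (r_j (-log r_j)^β)`. Each factor is integrable on `(0, ε_j)`: the substitution
`r = exp (-t)` turns it into `t^(-β)` on `(-log ε_j, ∞)`, and `β > 1`.
-/

open MeasureTheory Set Real

lemma image_exp_neg_Ioi (a : ℝ) : (fun t => exp (-t)) '' Ioi a = Ioo 0 (exp (-a)) := by
  rw [show (fun t => exp (-t)) = exp ∘ Neg.neg from rfl, image_comp, image_neg_Ioi, image_exp_Iio]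

lemma integrableOn_Ioo_inv_mul_neg_log_rpow {β ε : ℝ} (hβ : 1 < β) (hε₀ : 0 < ε) (hε₁ : ε < 1) :
    IntegrableOn (fun r => (r * (-log r) ^ β)⁻¹) (Ioo 0 ε) := by
  have ha : 0 < -log ε := neg_pos.2 (log_neg hε₀ hε₁)
  have hderiv : ∀ t ∈ Ioi (-log ε),
      HasDerivWithinAt (fun t => exp (-t)) (-exp (-t)) (Ioi (-log ε)) t := fun t _ => by
    simpa using ((hasDerivAt_neg t).exp).hasDerivWithinAt
  have hinj : InjOn (fun t => exp (-t)) (Ioi (-log ε)) :=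
    (exp_injective.comp neg_injective).injOn
  rw [← exp_log hε₀, ← neg_neg (log ε), ← image_exp_neg_Ioi,
    integrableOn_image_iff_integrableOn_abs_deriv_smul measurableSet_Ioi hderiv hinj]
  refine (integrableOn_Ioi_rpow_of_lt (neg_lt_neg hβ) ha).congr_fun (fun t ht => ?_)
    measurableSet_Ioi
  have ht : 0 < t := ha.trans ht
  rw [smul_eq_mul, abs_neg, abs_of_pos (exp_pos _), log_exp, neg_neg, mul_inv,
    mul_inv_cancel_left₀ (exp_pos _).ne']
  exact rpow_neg ht.le β

lemma prod_rpow_le_sum_rpow_mul_card {ι : Type*} (s : Finset ι) {a : ι → ℝ}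
    (ha : ∀ i ∈ s, 0 ≤ a i) {β : ℝ} (hβ : 0 ≤ β) :
    ∏ i ∈ s, a i ^ β ≤ (∑ i ∈ s, a i) ^ (β * s.card) := by
  have hsum : 0 ≤ ∑ i ∈ s, a i := Finset.sum_nonneg ha
  calc ∏ i ∈ s, a i ^ β ≤ ∏ _i ∈ s, (∑ i ∈ s, a i) ^ β :=
        Finset.prod_le_prod (fun i hi => rpow_nonneg (ha i hi) β) fun i hi =>
          rpow_le_rpow (ha i hi) (Finset.single_le_sum ha hi) hβ
    _ = (∑ i ∈ s, a i) ^ (β * s.card) := by rw [Finset.prod_const, rpow_mul hsum, rpow_natCast]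

lemma IntegrableOn.fintype_prod_univ_pi {𝕜 ι : Type*} [NormedCommRing 𝕜] [Fintype ι]
    {E : ι → Type*} [∀ i, MeasurableSpace (E i)] {μ : ∀ i, Measure (E i)}
    [∀ i, SigmaFinite (μ i)] {f : ∀ i, E i → 𝕜} {s : ∀ i, Set (E i)}
    (hf : ∀ i, IntegrableOn (f i) (s i) (μ i)) :
    IntegrableOn (fun x => ∏ i, f i (x i)) (univ.pi s) (Measure.pi μ) := by
  rw [IntegrableOn, Measure.restrict_pi_pi]
  exact Integrable.fintype_prod_dep hf

lemma Real.log_prod_inv {ι : Type*} (s : Finset ι) {x : ι → ℝ} (hx : ∀ i ∈ s, x i ≠ 0) :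
    log (∏ i ∈ s, (x i)⁻¹) = ∑ i ∈ s, -log (x i) := by
  rw [log_prod fun i hi => inv_ne_zero (hx i hi)]
  simp only [log_inv]

lemma norm_inv_prod_mul_log_prod_inv_rpow_le {ι : Type*} [Fintype ι] {x : ι → ℝ}
    (hx₀ : ∀ i, 0 < x i) (hx₁ : ∀ i, x i < 1) {β : ℝ} (hβ : 0 ≤ β) :
    ‖((∏ i, x i) * log (∏ i, (x i)⁻¹) ^ (β * Fintype.card ι))⁻¹‖ ≤
      ∏ i, (x i * (-log (x i)) ^ β)⁻¹ := by
  have hlog : ∀ i, 0 < -log (x i) := fun i => neg_pos.2 (log_neg (hx₀ i) (hx₁ i))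
  rw [log_prod_inv _ fun i _ => (hx₀ i).ne', Finset.prod_inv_distrib, Finset.prod_mul_distrib]
  have hprod : 0 < ∏ i, x i := Finset.prod_pos fun i _ => hx₀ i
  have hprod_rpow : 0 < ∏ i, (-log (x i)) ^ β :=
    Finset.prod_pos fun i _ => rpow_pos_of_pos (hlog i) β
  have hsum : 0 ≤ ∑ i, -log (x i) := Finset.sum_nonneg fun i _ => (hlog i).le
  rw [norm_of_nonneg (by positivity)]
  gcongr
  exact prod_rpow_le_sum_rpow_mul_card _ (fun i _ => (hlog i).le) hβ

/-- For `d ≥ 1`, `α > d` and `0 < ε_j < 1`, the function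
`r ↦ 1 / ((∏ r_j) · (log ∏ (1/r_j))^α)` is Lebesgue-integrable on the box `∏ (0, ε_j)`. -/
theorem stmt_0 (d : ℕ) (hd : 1 ≤ d) (α : ℝ) (hα : (d : ℝ) < α)
    (ε : Fin d → ℝ) (hε : ∀ j, 0 < ε j ∧ ε j < 1) :
    IntegrableOn
      (fun r : Fin d → ℝ =>
        ((∏ j, r j) * Real.log (∏ j, (r j)⁻¹) ^ α)⁻¹)
      (Set.univ.pi fun j => Set.Ioo (0 : ℝ) (ε j)) := by
  obtain ⟨β, hβ, rfl⟩ : ∃ β, 1 < β ∧ α = β * Fintype.card (Fin d) := by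
    have hd₀ : (0 : ℝ) < d := by exact_mod_cast hd
    exact ⟨α / d, (one_lt_div hd₀).2 hα, by rw [Fintype.card_fin, div_mul_cancel₀ _ hd₀.ne']⟩
  have hdom := IntegrableOn.fintype_prod_univ_pi fun j =>
    integrableOn_Ioo_inv_mul_neg_log_rpow hβ (hε j).1 (hε j).2
  refine hdom.mono' (by fun_prop) ?_
  filter_upwards [ae_restrict_mem (MeasurableSet.univ_pi fun _ => measurableSet_Ioo)] with x hx
  exact norm_inv_prod_mul_log_prod_inv_rpow_le (fun j => (hx j trivial).1)
    (fun j => (hx j trivial).2.trans (hε j).2) (zero_le_one.trans hβ.le)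
end

section
/- Let v ⊆ V be a 2-dimensional subspace with Q(x) < 0 for every nonzero x ∈ v, and let z ∈ V be a nonzero vector with Q(z) = 0. Then there exist exactly two pairs (X,Y) ∈ v × v satisfying the four conditions B(X,X) = B(Y,Y), B(X,Y) = 0, B(X,z) = 1 and B(Y,z) = 0; these two pairs have the same first component and opposite second components, i.e. they are of the form (X,Y) and (X,−Y) with Y ≠ 0, and for each of them (X,Y) is a basis of v with B(X,X) = B(Y,Y) < 0. -/
/-!
As `P` is positive definite, a negative semidefinite subspace meets it trivially and so has
dimension at most `dim N = 2`. If `z` were orthogonal to `v`, then `v + ℝ z` would be a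
negative semidefinite subspace of dimension 3; hence `B(·, z)` is a nonzero functional on `v`
and its kernel in `v` is a line `ℝ Y₀`. Every admissible `Y` lies on this line, so `X` is the
vector of `v` orthogonal to `Y₀` with `B(X, z) = 1`, and `B(Y, Y) = B(X, X)` fixes `Y` up to
sign because `B` is negative definite on the line.
-/

open Module

section Functional

variable {K V : Type*} [Field K] [AddCommGroup V] [Module K V]

theorem Submodule.span_pair_eq_of_linearIndependent {v : Submodule K V} (hv : finrank K v = 2)
    {x y : V} (hx : x ∈ v) (hy : y ∈ v) (hxy : LinearIndependent K ![x, y]) :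
    Submodule.span K {x, y} = v := by
  have : FiniteDimensional K v := Module.finite_of_finrank_eq_succ hv
  refine Submodule.eq_of_le_of_finrank_eq ?_ ?_
  · rw [Submodule.span_le]
    exact Set.insert_subset hx (Set.singleton_subset_iff.2 hy)
  · rw [hv, ← Matrix.range_cons_cons_empty x y ![], finrank_span_eq_card hxy]
    simp

theorem LinearMap.linearIndependent_pair_of_apply_ne_zero_of_apply_eq_zero (f : V →ₗ[K] K)
    {x y : V} (hx : f x ≠ 0) (hy : f y = 0) (hy0 : y ≠ 0) : LinearIndependent K ![x, y] := by
  refine LinearIndependent.pair_iff.2 fun s t hst => ?_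
  have hs : s = 0 := by simpa [hx, hy] using congrArg f hst
  subst hs
  simpa [hy0] using hst

theorem LinearMap.finrank_ker_domRestrict_add_one {v : Submodule K V} [FiniteDimensional K v]
    {f : V →ₗ[K] K} (hf : ∃ w ∈ v, f w ≠ 0) :
    finrank K (ker (f.domRestrict v)) + 1 = finrank K v := by
  obtain ⟨w, hw, hfw⟩ := hf
  refine Module.Dual.finrank_ker_add_one_of_ne_zero fun h => hfw ?_
  simpa using LinearMap.congr_fun h ⟨w, hw⟩

variable {v : Submodule K V} (hv : finrank K v = 2) {f : V →ₗ[K] K} (hf : ∃ w ∈ v, f w ≠ 0)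
include hv hf

theorem LinearMap.finrank_ker_domRestrict_eq_one : finrank K (ker (f.domRestrict v)) = 1 := by
  have : FiniteDimensional K v := Module.finite_of_finrank_eq_succ hv
  have := f.finrank_ker_domRestrict_add_one hf
  omega

theorem LinearMap.exists_mem_ne_zero_apply_eq_zero : ∃ y ∈ v, y ≠ 0 ∧ f y = 0 := by
  have : FiniteDimensional K v := Module.finite_of_finrank_eq_succ hv
  obtain ⟨⟨⟨y, hy⟩, hfy⟩, hy0⟩ :=
    Module.finrank_pos_iff_exists_ne_zero.1 (f.finrank_ker_domRestrict_eq_one hv hf).ge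
  exact ⟨y, hy, by simpa using hy0, hfy⟩

theorem LinearMap.exists_eq_smul_of_apply_eq_zero {x y : V} (hx : x ∈ v) (hy : y ∈ v)
    (hfx : f x = 0) (hfy : f y = 0) (hy0 : y ≠ 0) : ∃ s : K, x = s • y := by
  have hy0' : (⟨⟨y, hy⟩, hfy⟩ : ker (f.domRestrict v)) ≠ 0 := by
    simpa [Subtype.ext_iff] using hy0
  obtain ⟨s, hs⟩ := (finrank_eq_one_iff_of_nonzero' _ hy0').1
    (f.finrank_ker_domRestrict_eq_one hv hf) ⟨⟨x, hx⟩, hfx⟩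
  exact ⟨s, by simpa using congrArg (fun u : ker (f.domRestrict v) => (u : V)) hs.symm⟩

end Functional

section Signature

variable {V : Type*} [AddCommGroup V] [Module ℝ V] (B : LinearMap.BilinForm ℝ V)

theorem LinearMap.BilinForm.finrank_le_of_nonpos_of_isCompl [FiniteDimensional ℝ V]
    {P N W : Submodule ℝ V} (hcompl : IsCompl P N) (hP : ∀ p ∈ P, p ≠ 0 → 0 < B p p)
    (hW : ∀ x ∈ W, B x x ≤ 0) : finrank ℝ W ≤ finrank ℝ N := by
  have hdisj : Disjoint W P := Submodule.disjoint_def.2 fun x hxW hxP =>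
    by_contra fun hx => (hW x hxW).not_gt (hP x hxP hx)
  have := Submodule.finrank_add_finrank_le_of_disjoint hdisj
  have := Submodule.finrank_add_eq_of_isCompl hcompl
  omega

theorem LinearMap.BilinForm.nonpos_of_mem_sup_span_isotropic (hBsymm : ∀ x y : V, B x y = B y x)
    {v : Submodule ℝ V} (hv : ∀ x ∈ v, B x x ≤ 0) {z : V} (hzz : B z z = 0)
    (hvz : ∀ w ∈ v, B w z = 0) : ∀ x ∈ v ⊔ ℝ ∙ z, B x x ≤ 0 := by
  intro x hx
  obtain ⟨w, hw, y, hy, rfl⟩ := Submodule.mem_sup.1 hx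
  obtain ⟨t, rfl⟩ := Submodule.mem_span_singleton.1 hy
  have hwz := hvz w hw
  have hzw : B z w = 0 := hBsymm z w ▸ hwz
  simpa [hwz, hzw, hzz] using hv w hw

theorem LinearMap.BilinForm.exists_mem_apply_ne_zero_of_isotropic [FiniteDimensional ℝ V]
    (hBsymm : ∀ x y : V, B x y = B y x) {P N : Submodule ℝ V} (hcompl : IsCompl P N)
    (hP : ∀ p ∈ P, p ≠ 0 → 0 < B p p) {v : Submodule ℝ V} (hvN : finrank ℝ N ≤ finrank ℝ v)
    (hv : ∀ x ∈ v, x ≠ 0 → B x x < 0) {z : V} (hz0 : z ≠ 0) (hzz : B z z = 0) :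
    ∃ w ∈ v, B w z ≠ 0 := by
  by_contra! hvz
  have hv' : ∀ x ∈ v, B x x ≤ 0 := fun x hx => by
    rcases eq_or_ne x 0 with rfl | hx0
    · simp
    · exact (hv x hx hx0).le
  have hzv : z ∉ v := fun hz => (hv z hz hz0).ne hzz
  have hsup := Submodule.finrank_sup_add_finrank_inf_eq v (ℝ ∙ z)
  rw [(Submodule.disjoint_span_singleton.2 fun hz => absurd hz hzv).eq_bot, finrank_bot,
    finrank_span_singleton hz0] at hsup
  have := B.finrank_le_of_nonpos_of_isCompl hcompl hP
    (B.nonpos_of_mem_sup_span_isotropic hBsymm hv' hzz hvz)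
  omega

end Signature

section NegativePlane

variable {V : Type*} [AddCommGroup V] [Module ℝ V] (B : LinearMap.BilinForm ℝ V)
  {v : Submodule ℝ V} (hv : ∀ x ∈ v, x ≠ 0 → B x x < 0) {z : V}
include hv

theorem LinearMap.BilinForm.exists_orthogonal_pair_of_negDef {w : V} (hw : w ∈ v)
    (hwz : B w z ≠ 0) {Y₀ : V} (hY₀ : Y₀ ∈ v) (hY₀0 : Y₀ ≠ 0) (hY₀z : B Y₀ z = 0) :
    ∃ X Y : V, X ∈ v ∧ Y ∈ v ∧ Y ≠ 0 ∧
      B X X = B Y Y ∧ B X Y = 0 ∧ B X z = 1 ∧ B Y z = 0 := by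
  have hY₀Y₀ := hv Y₀ hY₀ hY₀0
  -- Gram–Schmidt against `Y₀`, then normalize `B X z = 1`
  set X := (B w z)⁻¹ • (w - (B w Y₀ / B Y₀ Y₀) • Y₀)
  have hX : X ∈ v := v.smul_mem _ (v.sub_mem hw (v.smul_mem _ hY₀))
  have hXz : B X z = 1 := by simp [X, hY₀z, hwz]
  have hXY₀ : B X Y₀ = 0 := by simp [X, hY₀Y₀.ne]
  have hXX : B X X < 0 := hv X hX fun h => by simp [h] at hXz
  have hratio : 0 < B X X / B Y₀ Y₀ := div_pos_of_neg_of_neg hXX hY₀Y₀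
  set t := √(B X X / B Y₀ Y₀)
  refine ⟨X, t • Y₀, hX, v.smul_mem _ hY₀, smul_ne_zero (Real.sqrt_pos.2 hratio).ne' hY₀0,
    ?_, by simp [hXY₀], hXz, by simp [hY₀z]⟩
  have ht : t * t = B X X / B Y₀ Y₀ := Real.mul_self_sqrt hratio.le
  simp only [map_smul, LinearMap.smul_apply, smul_eq_mul, ← mul_assoc]
  rw [ht, div_mul_cancel₀ _ hY₀Y₀.ne]

variable (hvdim : finrank ℝ v = 2) (hvz : ∃ w ∈ v, B w z ≠ 0)
include hvdim hvz

theorem LinearMap.BilinForm.eq_and_eq_or_eq_neg_of_negDef {X Y X' Y' : V}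
    (hX : X ∈ v) (hY : Y ∈ v) (hY0 : Y ≠ 0) (hXY : B X Y = 0) (hXz : B X z = 1) (hYz : B Y z = 0)
    (hQ : B X X = B Y Y) (hX' : X' ∈ v) (hY' : Y' ∈ v) (hQ' : B X' X' = B Y' Y')
    (hX'Y' : B X' Y' = 0) (hX'z : B X' z = 1) (hY'z : B Y' z = 0) :
    X' = X ∧ (Y' = Y ∨ Y' = -Y) := by
  have hYY := hv Y hY hY0
  obtain ⟨s, rfl⟩ := (B.flip z).exists_eq_smul_of_apply_eq_zero hvdim hvz hY' hY hY'z hYz hY0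
  have hs : s ≠ 0 := by
    rintro rfl
    have hX'0 : X' = 0 := by_contra fun h => (hv X' hX' h).ne (by simpa using hQ')
    simp [hX'0] at hX'z
  have hX'Y : B X' Y = 0 := by simpa [hs] using hX'Y'
  obtain ⟨u, hu⟩ := (B.flip z).exists_eq_smul_of_apply_eq_zero hvdim hvz (v.sub_mem hX' hX) hY
    (by simp [hX'z, hXz]) hYz hY0
  have hu0 : u = 0 := by
    have : B (X' - X) Y = 0 := by simp [hX'Y, hXY]
    simpa [hu, hYY.ne] using this
  have hXeq : X' = X := by rwa [hu0, zero_smul, sub_eq_zero] at hu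
  refine ⟨hXeq, ?_⟩
  have hs2 : (s - 1) * (s + 1) * B Y Y = 0 := by
    simp only [hXeq, map_smul, LinearMap.smul_apply, smul_eq_mul] at hQ'
    linear_combination hQ - hQ'
  rcases mul_eq_zero.1 ((mul_eq_zero.1 hs2).resolve_right hYY.ne) with h | h
  · left; rw [sub_eq_zero.1 h, one_smul]
  · right; rw [eq_neg_of_add_eq_zero_left h, neg_one_smul]

end NegativePlane

theorem stmt_10_general {V : Type*} [AddCommGroup V] [Module ℝ V] [FiniteDimensional ℝ V]
    (B : LinearMap.BilinForm ℝ V) (hBsymm : ∀ x y : V, B x y = B y x)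
    (P N : Submodule ℝ V) (hcompl : IsCompl P N)
    (hP : ∀ p ∈ P, p ≠ 0 → 0 < B p p)
    (hdimN : Module.finrank ℝ N = 2)
    (v : Submodule ℝ V) (hvdim : Module.finrank ℝ v = 2)
    (hv : ∀ x ∈ v, x ≠ 0 → B x x < 0)
    (z : V) (hz0 : z ≠ 0) (hzz : B z z = 0) :
    ∃ X Y : V, X ∈ v ∧ Y ∈ v ∧ Y ≠ 0 ∧
      B X X = B Y Y ∧ B X Y = 0 ∧ B X z = 1 ∧ B Y z = 0 ∧ B X X < 0 ∧
      LinearIndependent ℝ ![X, Y] ∧ Submodule.span ℝ ({X, Y} : Set V) = v ∧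
      ∀ X' Y' : V, X' ∈ v → Y' ∈ v → B X' X' = B Y' Y' → B X' Y' = 0 →
        B X' z = 1 → B Y' z = 0 → X' = X ∧ (Y' = Y ∨ Y' = -Y) := by
  have hvz : ∃ w ∈ v, B w z ≠ 0 :=
    B.exists_mem_apply_ne_zero_of_isotropic hBsymm hcompl hP (hdimN.trans hvdim.symm).le hv hz0 hzz
  have ⟨w, hw, hwz⟩ := hvz
  obtain ⟨Y₀, hY₀, hY₀0, hY₀z⟩ := (B.flip z).exists_mem_ne_zero_apply_eq_zero hvdim hvz
  obtain ⟨X, Y, hX, hY, hY0, hQ, hXY, hXz, hYz⟩ :=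
    B.exists_orthogonal_pair_of_negDef hv hw hwz hY₀ hY₀0 hY₀z
  have hind : LinearIndependent ℝ ![X, Y] :=
    (B.flip z).linearIndependent_pair_of_apply_ne_zero_of_apply_eq_zero (by simp [hXz]) hYz hY0
  refine ⟨X, Y, hX, hY, hY0, hQ, hXY, hXz, hYz, hv X hX fun h => by simp [h] at hXz, hind,
    Submodule.span_pair_eq_of_linearIndependent hvdim hX hY hind,
    fun X' Y' hX' hY' hQ' hX'Y' hX'z hY'z => B.eq_and_eq_or_eq_neg_of_negDef hv hvdim hvz
      hX hY hY0 hXY hXz hYz hQ hX' hY' hQ' hX'Y' hX'z hY'z⟩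

/-- In a real quadratic space of signature `(n,2)` (given by an orthogonal
decomposition `V = P ⊕ N` as below), let `v` be a 2-dimensional negative definite
subspace and let `z ≠ 0` be isotropic. Then there are exactly two pairs
`(X,Y) ∈ v × v` with `B(X,X) = B(Y,Y)`, `B(X,Y) = 0`, `B(X,z) = 1`, `B(Y,z) = 0`;
they have the same first component and opposite second components `(X,Y)`, `(X,−Y)`
with `Y ≠ 0`, and `(X,Y)` is a basis of `v` with `B(X,X) = B(Y,Y) < 0`. -/
theorem stmt_10 {V : Type*} [AddCommGroup V] [Module ℝ V] [FiniteDimensional ℝ V]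
    (B : LinearMap.BilinForm ℝ V) (hBsymm : ∀ x y : V, B x y = B y x)
    (P N : Submodule ℝ V) (hcompl : IsCompl P N)
    (horth : ∀ p ∈ P, ∀ q ∈ N, B p q = 0)
    (hP : ∀ p ∈ P, p ≠ 0 → 0 < B p p)
    (hN : ∀ q ∈ N, q ≠ 0 → B q q < 0)
    (hdimN : Module.finrank ℝ N = 2)
    (v : Submodule ℝ V) (hvdim : Module.finrank ℝ v = 2)
    (hv : ∀ x ∈ v, x ≠ 0 → B x x < 0)
    (z : V) (hz0 : z ≠ 0) (hzz : B z z = 0) :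
    ∃ X Y : V, X ∈ v ∧ Y ∈ v ∧ Y ≠ 0 ∧
      B X X = B Y Y ∧ B X Y = 0 ∧ B X z = 1 ∧ B Y z = 0 ∧ B X X < 0 ∧
      LinearIndependent ℝ ![X, Y] ∧ Submodule.span ℝ ({X, Y} : Set V) = v ∧
      ∀ X' Y' : V, X' ∈ v → Y' ∈ v → B X' X' = B Y' Y' → B X' Y' = 0 →
        B X' z = 1 → B Y' z = 0 → X' = X ∧ (Y' = Y ∨ Y' = -Y) :=
  stmt_10_general B hBsymm P N hcompl hP hdimN v hvdim hv z hz0 hzz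
end

section
/- Let V be a finite-dimensional real vector space (with its canonical topology) equipped with a symmetric bilinear form B. Let d ≥ 1 be an integer, let ω_1, …, ω_d ∈ V satisfy B(ω_i, ω_j) < 0 for all 1 ≤ i, j ≤ d, and let M ⊆ V be a compact subset. For b = (b_1,…,b_d) with all b_j ≥ 0 and y ∈ M, write Y_σ = Σ_{j=1}^d b_j ω_j and Y = Y_σ + y. Then: (i) for every real m there exists R > 0 such that −B(Y,Y) > 2m whenever max_j b_j > R and y ∈ M; (ii) for every δ > 0 there exists R > 0 such that whenever max_j b_j > R and y ∈ M one has −B(Y_σ,Y_σ) > 0, −B(Y,Y) > 0, and | log(−B(Y,Y)) − log(−B(Y_σ,Y_σ)) | < δ. -/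
/-!
Put `S = ∑ j, b j`, which exceeds `max_j b j`. On the cone spanned by the `ω j` the form `-B` grows
quadratically, `-B(Y_σ, Y_σ) ≥ ε S²` with `ε = min_{i,j} -B(ω i, ω j) > 0`, whereas moving `Y_σ` by
a vector `y` of the bounded set `M` changes `B(Y_σ, Y_σ)` only by `O(S)`, since `B` is continuous.
Hence `-B(Y, Y) → ∞` and `-B(Y, Y) / -B(Y_σ, Y_σ) → 1` as `S → ∞`.
-/

open Finset Real Filter Topology

lemma Finite.exists_pos_forall_le {ι : Type*} [Finite ι] {f : ι → ℝ} (hf : ∀ i, 0 < f i) :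
    ∃ ε > 0, ∀ i, ε ≤ f i :=
  have : ∀ᶠ ε in 𝓝[>] (0 : ℝ), (∀ i, ε ≤ f i) ∧ 0 < ε :=
    (eventually_all.2 fun i ↦ (eventually_le_nhds (hf i)).filter_mono nhdsWithin_le_nhds).and
      self_mem_nhdsWithin
  this.exists.imp fun _ h ↦ ⟨h.2, h.1⟩

lemma norm_sum_smul_le_sum_mul_sum_norm {ι E : Type*} [Fintype ι] [SeminormedAddCommGroup E]
    [NormedSpace ℝ E] {b : ι → ℝ} (hb : ∀ j, 0 ≤ b j) (v : ι → E) :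
    ‖∑ j, b j • v j‖ ≤ (∑ j, b j) * ∑ j, ‖v j‖ :=
  calc ‖∑ j, b j • v j‖ ≤ ∑ j, b j * ‖v j‖ := by
        refine (norm_sum_le _ _).trans_eq (sum_congr rfl fun j _ ↦ ?_)
        rw [norm_smul, Real.norm_of_nonneg (hb j)]
    _ ≤ ∑ j, (∑ i, b i) * ‖v j‖ := by
        gcongr with j; exact single_le_sum (fun i _ ↦ hb i) (mem_univ j)
    _ = (∑ j, b j) * ∑ j, ‖v j‖ := (mul_sum ..).symm

lemma LinearMap.BilinForm.mul_sq_sum_le_apply_sum_smul {ι M : Type*} [Fintype ι] [AddCommGroup M]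
    [Module ℝ M] (B : LinearMap.BilinForm ℝ M) {ε : ℝ} {v : ι → M} (hε : ∀ i j, ε ≤ B (v i) (v j))
    {b : ι → ℝ} (hb : ∀ j, 0 ≤ b j) :
    ε * (∑ j, b j) ^ 2 ≤ B (∑ j, b j • v j) (∑ j, b j • v j) := by
  have expand : B (∑ j, b j • v j) (∑ j, b j • v j) = ∑ j, ∑ i, b j * (b i * B (v i) (v j)) := by
    simp only [map_sum, map_smul, LinearMap.sum_apply, LinearMap.smul_apply, smul_eq_mul, mul_sum]
  rw [expand, sq, sum_mul_sum, mul_sum]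
  refine sum_le_sum fun j _ ↦ ?_
  rw [mul_sum]
  refine sum_le_sum fun i _ ↦ ?_
  nlinarith [mul_le_mul_of_nonneg_left (hε i j) (mul_nonneg (hb i) (hb j))]

lemma ContinuousLinearMap.abs_apply_add_self_sub_le {E : Type*} [SeminormedAddCommGroup E]
    [NormedSpace ℝ E] (f : E →L[ℝ] E →L[ℝ] ℝ) (x y : E) :
    |f (x + y) (x + y) - f x x| ≤ ‖f‖ * (2 * ‖x‖ * ‖y‖ + ‖y‖ ^ 2) := by
  have hxy := f.le_opNorm₂ x y
  have hyx := f.le_opNorm₂ y x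
  have hyy := f.le_opNorm₂ y y
  rw [Real.norm_eq_abs] at hxy hyx hyy
  have : f (x + y) (x + y) - f x x = f x y + f y x + f y y := by
    simp only [map_add, add_apply]; ring
  rw [this]
  calc |f x y + f y x + f y y| ≤ |f x y| + |f y x| + |f y y| := abs_add_three ..
    _ ≤ _ := by linarith

lemma LinearMap.BilinForm.exists_abs_apply_add_sub_le_mul_sum {ι V : Type*} [Fintype ι]
    [NormedAddCommGroup V] [NormedSpace ℝ V] [FiniteDimensional ℝ V]
    (B : LinearMap.BilinForm ℝ V) (v : ι → V) {M : Set V} (hM : Bornology.IsBounded M) :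
    ∃ D, ∀ b : ι → ℝ, (∀ j, 0 ≤ b j) → 1 ≤ ∑ j, b j → ∀ y ∈ M,
      |B (∑ j, b j • v j + y) (∑ j, b j • v j + y) - B (∑ j, b j • v j) (∑ j, b j • v j)|
        ≤ D * ∑ j, b j := by
  obtain ⟨K, hK, hMK⟩ := hM.exists_pos_norm_le
  set f := B.toContinuousBilinearMap
  set W := ∑ j, ‖v j‖
  refine ⟨‖f‖ * (2 * W * K + K ^ 2), fun b hb hS y hy ↦ ?_⟩
  set S := ∑ j, b j
  have hs : ‖∑ j, b j • v j‖ ≤ S * W := norm_sum_smul_le_sum_mul_sum_norm hb v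
  have hy := hMK y hy
  calc _ = |f (∑ j, b j • v j + y) (∑ j, b j • v j + y) - f (∑ j, b j • v j) (∑ j, b j • v j)| :=
        rfl
    _ ≤ ‖f‖ * (2 * ‖∑ j, b j • v j‖ * ‖y‖ + ‖y‖ ^ 2) := f.abs_apply_add_self_sub_le _ _
    _ ≤ ‖f‖ * (2 * (S * W) * K + K ^ 2 * S) := by
        gcongr
        calc ‖y‖ ^ 2 ≤ K ^ 2 := by gcongr
          _ ≤ K ^ 2 * S := le_mul_of_one_le_right (by positivity) hS
    _ = ‖f‖ * (2 * W * K + K ^ 2) * S := by ring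

lemma exists_forall_lt_of_sq_le_of_abs_sub_le {ε : ℝ} (hε : 0 < ε) (D m : ℝ) :
    ∃ R, 1 ≤ R ∧ ∀ S q q' : ℝ, R < S → ε * S ^ 2 ≤ q → |q' - q| ≤ D * S → m < q' := by
  refine ⟨max 1 ((|m| + |D|) / ε), le_max_left .., fun S q q' hS hq hq' ↦ ?_⟩
  obtain ⟨hS1, hεS⟩ := max_lt_iff.1 hS
  rw [div_lt_iff₀ hε] at hεS
  calc m ≤ |m| * S := (le_abs_self m).trans (le_mul_of_one_le_right (abs_nonneg m) hS1.le)
    _ < ε * S ^ 2 - |D| * S := by nlinarith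
    _ ≤ q' := by
        linarith [(abs_le.1 hq').1,
          mul_le_mul_of_nonneg_right (le_abs_self D) (zero_le_one.trans hS1.le)]

lemma exists_pos_forall_abs_log_sub_log_lt {δ : ℝ} (hδ : 0 < δ) :
    ∃ η > 0, ∀ a b : ℝ, 0 < b → |a - b| < η * b → 0 < a ∧ |log a - log b| < δ := by
  obtain ⟨η, hη, hlog⟩ := Metric.continuousAt_iff.1 (continuousAt_log one_ne_zero) δ hδ
  refine ⟨min η 1, by positivity, fun a b hb hab ↦ ?_⟩
  have hratio : |a / b - 1| < min η 1 := by
    rwa [div_sub_one hb.ne', abs_div, abs_of_pos hb, div_lt_iff₀ hb]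
  have hab0 : 0 < a / b := by linarith [(abs_lt.1 hratio).1, min_le_right η 1]
  have ha : 0 < a := (div_pos_iff_of_pos_right hb).1 hab0
  refine ⟨ha, ?_⟩
  rw [← log_div ha.ne' hb.ne']
  simpa [dist_eq] using hlog (by rw [dist_eq]; exact hratio.trans_le (min_le_left η 1))

lemma exists_forall_abs_log_sub_log_lt_of_sq_le_of_abs_sub_le {ε : ℝ} (hε : 0 < ε) (D : ℝ)
    {δ : ℝ} (hδ : 0 < δ) :
    ∃ R, 1 ≤ R ∧ ∀ S q q' : ℝ, R < S → ε * S ^ 2 ≤ q → |q' - q| ≤ D * S →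
      0 < q ∧ 0 < q' ∧ |log q' - log q| < δ := by
  obtain ⟨η, hη, hlog⟩ := exists_pos_forall_abs_log_sub_log_lt hδ
  refine ⟨max 1 (|D| / (ε * η)), le_max_left .., fun S q q' hS hq hq' ↦ ?_⟩
  obtain ⟨hS1, hεS⟩ := max_lt_iff.1 hS
  rw [div_lt_iff₀ (by positivity), mul_comm] at hεS
  have hS0 : 0 < S := zero_lt_one.trans hS1
  have hq0 : 0 < q := lt_of_lt_of_le (by positivity) hq
  refine ⟨hq0, hlog q' q hq0 ?_⟩
  calc |q' - q| ≤ D * S := hq'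
    _ ≤ |D| * S := by gcongr; exact le_abs_self D
    _ < ε * η * S * S := by gcongr
    _ = η * (ε * S ^ 2) := by ring
    _ ≤ η * q := by gcongr

lemma lt_sum_of_exists_lt {ι : Type*} [Fintype ι] {b : ι → ℝ} (hb : ∀ j, 0 ≤ b j) {R : ℝ}
    (h : ∃ j, R < b j) : R < ∑ j, b j :=
  let ⟨j, hj⟩ := h
  hj.trans_le (single_le_sum (fun i _ ↦ hb i) (mem_univ j))

theorem stmt_13_general {V : Type*} [NormedAddCommGroup V] [NormedSpace ℝ V]
    [FiniteDimensional ℝ V]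
    (B : LinearMap.BilinForm ℝ V)
    (d : ℕ) (ω : Fin d → V) (hω : ∀ i j, B (ω i) (ω j) < 0)
    (M : Set V) (hM : IsCompact M) :
    (∀ m : ℝ, ∃ R : ℝ, 0 < R ∧ ∀ b : Fin d → ℝ, (∀ j, 0 ≤ b j) → ∀ y ∈ M,
      (∃ j, R < b j) →
      2 * m < -B ((∑ j, b j • ω j) + y) ((∑ j, b j • ω j) + y)) ∧
    (∀ δ : ℝ, 0 < δ → ∃ R : ℝ, 0 < R ∧ ∀ b : Fin d → ℝ, (∀ j, 0 ≤ b j) → ∀ y ∈ M,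
      (∃ j, R < b j) →
      0 < -B (∑ j, b j • ω j) (∑ j, b j • ω j) ∧
      0 < -B ((∑ j, b j • ω j) + y) ((∑ j, b j • ω j) + y) ∧
      |Real.log (-B ((∑ j, b j • ω j) + y) ((∑ j, b j • ω j) + y)) -
        Real.log (-B (∑ j, b j • ω j) (∑ j, b j • ω j))| < δ) := by
  obtain ⟨ε, hε, hεω⟩ :=
    Finite.exists_pos_forall_le fun p : Fin d × Fin d ↦ neg_pos.2 (hω p.1 p.2)
  obtain ⟨D, hD⟩ := (-B).exists_abs_apply_add_sub_le_mul_sum ω hM.isBounded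
  have growth (b : Fin d → ℝ) (hb : ∀ j, 0 ≤ b j) :
      ε * (∑ j, b j) ^ 2 ≤ (-B) (∑ j, b j • ω j) (∑ j, b j • ω j) :=
    (-B).mul_sq_sum_le_apply_sum_smul (fun i j ↦ hεω (i, j)) hb
  refine ⟨fun m ↦ ?_, fun δ hδ ↦ ?_⟩
  · obtain ⟨R, hR, hq'⟩ := exists_forall_lt_of_sq_le_of_abs_sub_le hε D (2 * m)
    refine ⟨R, by positivity, fun b hb y hy hbR ↦ ?_⟩
    have hS := lt_sum_of_exists_lt hb hbR
    exact hq' _ _ _ hS (growth b hb) (hD b hb (hR.trans hS.le) y hy)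
  · obtain ⟨R, hR, hlog⟩ := exists_forall_abs_log_sub_log_lt_of_sq_le_of_abs_sub_le hε D hδ
    refine ⟨R, by positivity, fun b hb y hy hbR ↦ ?_⟩
    have hS := lt_sum_of_exists_lt hb hbR
    exact hlog _ _ _ hS (growth b hb) (hD b hb (hR.trans hS.le) y hy)

/-- Let `V` be a finite-dimensional real vector space with a symmetric
bilinear form `B`, let `ω_1, …, ω_d` (`d ≥ 1`) satisfy `B(ω_i,ω_j) < 0` for all `i,j`,
and let `M ⊆ V` be compact. Writing `Y_σ = Σ b_j ω_j` and `Y = Y_σ + y` for `b_j ≥ 0`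
and `y ∈ M`: (i) for every real `m` there is `R > 0` such that `−B(Y,Y) > 2m` whenever
`max_j b_j > R`; (ii) for every `δ > 0` there is `R > 0` such that whenever
`max_j b_j > R` one has `−B(Y_σ,Y_σ) > 0`, `−B(Y,Y) > 0`, and
`|log(−B(Y,Y)) − log(−B(Y_σ,Y_σ))| < δ`. -/
theorem stmt_13 {V : Type*} [NormedAddCommGroup V] [NormedSpace ℝ V]
    [FiniteDimensional ℝ V]
    (B : LinearMap.BilinForm ℝ V) (hBsymm : ∀ x y : V, B x y = B y x)
    (d : ℕ) (hd : 1 ≤ d) (ω : Fin d → V) (hω : ∀ i j, B (ω i) (ω j) < 0)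
    (M : Set V) (hM : IsCompact M) :
    (∀ m : ℝ, ∃ R : ℝ, 0 < R ∧ ∀ b : Fin d → ℝ, (∀ j, 0 ≤ b j) → ∀ y ∈ M,
      (∃ j, R < b j) →
      2 * m < -B ((∑ j, b j • ω j) + y) ((∑ j, b j • ω j) + y)) ∧
    (∀ δ : ℝ, 0 < δ → ∃ R : ℝ, 0 < R ∧ ∀ b : Fin d → ℝ, (∀ j, 0 ≤ b j) → ∀ y ∈ M,
      (∃ j, R < b j) →
      0 < -B (∑ j, b j • ω j) (∑ j, b j • ω j) ∧
      0 < -B ((∑ j, b j • ω j) + y) ((∑ j, b j • ω j) + y) ∧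
      |Real.log (-B ((∑ j, b j • ω j) + y) ((∑ j, b j • ω j) + y)) -
        Real.log (-B (∑ j, b j • ω j) (∑ j, b j • ω j))| < δ) :=
  stmt_13_general B d ω hω M hM
end

section
/- Let V be a finite-dimensional real vector space with a symmetric bilinear form B, write Q(x) = B(x,x), and assume V = P ⊕ N is an orthogonal direct sum decomposition with Q(p) > 0 for every nonzero p ∈ P, Q(q) < 0 for every nonzero q ∈ N, and dim N = 1 (so B is Lorentzian, of signature (dim P, 1)). Let L ⊆ V be the ℤ-span of an ℝ-basis of V (a full lattice), and let ω ∈ V satisfy Q(ω) < 0. Then the set of linear automorphisms g of V such that B(gx, gy) = B(x,y) for all x,y ∈ V, g(L) = L, and g(ω) = ω, is finite. -/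
/-!
For `B(ω, ω) < 0` the form `B_ω(x, y) = B(x, y) - 2 B(x, ω) B(y, ω) / B(ω, ω)` is positive
definite: it is `-B` on `ℝ ω` and `B` on `ω^⊥`, where `B` is positive because the signature
leaves room for only one negative direction. Isometries of `B` fixing `ω` preserve `B_ω`, and an
isometry of a positive definite form preserving a lattice sends each basis vector to one of the
finitely many lattice vectors of bounded `B_ω`-norm, so there are only finitely many of them.
-/

open Module Submodule

lemma finite_setOf_intCast_sq_le (K : ℝ) : {n : ℤ | (n : ℝ) ^ 2 ≤ K}.Finite := by
  refine (Set.finite_Icc (-⌈K⌉) ⌈K⌉).subset fun n (hn : (n : ℝ) ^ 2 ≤ K) => ?_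
  have habs : |n| ≤ n ^ 2 := by simpa using Int.natAbs_le_self_sq n
  rw [Set.mem_Icc, ← abs_le, ← Int.cast_le (R := ℝ)]
  calc ((|n| : ℤ) : ℝ) ≤ ((n ^ 2 : ℤ) : ℝ) := Int.cast_le.2 habs
    _ ≤ K := by push_cast; exact hn
    _ ≤ ⌈K⌉ := Int.le_ceil K

namespace LinearMap.BilinForm

variable {V : Type*} [AddCommGroup V] [Module ℝ V]

lemma finite_setOf_mem_span_apply_self_le {B : LinearMap.BilinForm ℝ V} (hB : B.IsSymm)
    (hpos : ∀ x, x ≠ 0 → 0 < B x x) {ι : Type*} [Finite ι] (b : Basis ι ℝ V) (C : ℝ) :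
    {v | v ∈ span ℤ (Set.range b) ∧ B v v ≤ C}.Finite := by
  classical
  have hs : ∀ x, 0 ≤ B x x := fun x => by
    rcases eq_or_ne x 0 with rfl | hx
    · simp
    · exact (hpos x hx).le
  have hnd : B.Nondegenerate :=
    (nondegenerate_iff' B hs (isSymm_iff.1 hB)).2 hpos
  set d := B.dualBasis hnd b
  have hcoord : ∀ x i, b.repr x i = B x (d i) := fun x i => by
    rw [← dualBasis_repr_apply hnd d, dualBasis_dualBasis hnd hB]
  have hfin : (Set.univ.pi fun i => ((↑) : ℤ → ℝ) ''
      {n : ℤ | (n : ℝ) ^ 2 ≤ C * B (d i) (d i)}).Finite :=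
    Set.Finite.pi fun i => (finite_setOf_intCast_sq_le _).image _
  refine (hfin.preimage b.equivFun.injective.injOn).subset ?_
  rintro v ⟨hvL, hvC⟩ i -
  obtain ⟨n, hn⟩ := (b.mem_span_iff_repr_mem ℤ v).1 hvL i
  refine ⟨n, ?_, by simpa using hn⟩
  calc (n : ℝ) ^ 2 = B v (d i) ^ 2 := by rw [← hcoord, ← hn]; rfl
    _ ≤ B v v * B (d i) (d i) := apply_sq_le_of_symm B hs (isSymm_iff.1 hB) _ _
    _ ≤ C * B (d i) (d i) := mul_le_mul_of_nonneg_right hvC (hs _)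

lemma finite_setOf_isometry_mapsTo_span {B : LinearMap.BilinForm ℝ V} (hB : B.IsSymm)
    (hpos : ∀ x, x ≠ 0 → 0 < B x x) {ι : Type*} [Finite ι] (b : Basis ι ℝ V) :
    {g : V ≃ₗ[ℝ] V | (∀ x, B (g x) (g x) = B x x) ∧
      Set.MapsTo g (span ℤ (Set.range b)) (span ℤ (Set.range b))}.Finite := by
  set S := {v | v ∈ span ℤ (Set.range b) ∧ B v v ≤ ⨆ i, B (b i) (b i)}
  have hS : (Set.univ.pi fun _ : ι => S).Finite :=
    Set.Finite.pi fun _ => finite_setOf_mem_span_apply_self_le hB hpos b _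
  refine Set.Finite.of_finite_image (f := fun g : V ≃ₗ[ℝ] V => fun i => g (b i)) (hS.subset ?_)
    fun g _ g' _ h => LinearEquiv.toLinearMap_injective (b.ext (congrFun h))
  rintro _ ⟨g, ⟨hgB, hgL⟩, rfl⟩ i -
  exact ⟨hgL (subset_span ⟨i, rfl⟩),
    (hgB _).trans_le (le_ciSup (f := fun i => B (b i) (b i)) (Set.finite_range _).bddAbove i)⟩

lemma apply_self_nonpos_of_mem_span_pair {B : LinearMap.BilinForm ℝ V} (hB : B.IsSymm)
    {u w : V} (huw : B u w = 0) (hu : B u u ≤ 0) (hw : B w w ≤ 0) {x : V}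
    (hx : x ∈ span ℝ {u, w}) : B x x ≤ 0 := by
  obtain ⟨s, t, rfl⟩ := mem_span_pair.1 hx
  have hwu : B w u = 0 := hB.eq u w ▸ huw
  have : B (s • u + t • w) (s • u + t • w) = s ^ 2 * B u u + t ^ 2 * B w w := by
    simp only [map_add, map_smul, LinearMap.add_apply, LinearMap.smul_apply, smul_eq_mul, huw,
      hwu]
    ring
  rw [this]
  nlinarith [sq_nonneg s, sq_nonneg t]

lemma apply_self_pos_of_apply_eq_zero [FiniteDimensional ℝ V] {B : LinearMap.BilinForm ℝ V}
    (hB : B.IsSymm) {P : Submodule ℝ V} (hP : ∀ p ∈ P, p ≠ 0 → 0 < B p p)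
    (hcodim : finrank ℝ V ≤ finrank ℝ P + 1) {ω w : V} (hω : B ω ω < 0) (hωw : B ω w = 0)
    (hw : w ≠ 0) : 0 < B w w := by
  -- Otherwise `B` is negative semidefinite on the plane `span {ω, w}`, which then meets the
  -- positive definite hyperplane `P` only in `0`: too many dimensions.
  by_contra! hww
  have hli : LinearIndependent ℝ ![ω, w] := by
    refine LinearIndependent.pair_iff.2 fun s t hst => ?_
    have hs : s * B ω ω = 0 := by simpa [hωw] using congrArg (B ω) hst
    obtain rfl : s = 0 := (mul_eq_zero.1 hs).resolve_right hω.ne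
    exact ⟨rfl, (smul_eq_zero.1 (by simpa using hst)).resolve_right hw⟩
  have hrank : finrank ℝ (span ℝ {ω, w}) = 2 := by
    rw [← Matrix.range_cons_cons_empty ω w ![], finrank_span_eq_card hli, Fintype.card_fin]
  have hdisj : Disjoint (span ℝ {ω, w}) P := by
    refine disjoint_def.2 fun x hxW hxP => ?_
    by_contra hx
    exact (hP x hxP hx).not_ge (apply_self_nonpos_of_mem_span_pair hB hωw hω.le hww hxW)
  have := finrank_sup_add_finrank_inf_eq (span ℝ {ω, w}) P
  rw [hdisj.eq_bot, finrank_bot] at this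
  have := finrank_le (span ℝ {ω, w} ⊔ P)
  omega

/-- Flips the sign of `B` on the line `ℝ ω` and agrees with `B` on its orthogonal complement. -/
noncomputable def majorant (B : LinearMap.BilinForm ℝ V) (ω : V) : LinearMap.BilinForm ℝ V :=
  B - (2 / B ω ω) • (B.flip ω).smulRight (B.flip ω)

lemma majorant_apply (B : LinearMap.BilinForm ℝ V) (ω x y : V) :
    majorant B ω x y = B x y - 2 / B ω ω * (B x ω * B y ω) := by
  simp [majorant]

lemma IsSymm.majorant {B : LinearMap.BilinForm ℝ V} (hB : B.IsSymm) (ω : V) :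
    (majorant B ω).IsSymm :=
  isSymm_def.2 fun x y => by rw [majorant_apply, majorant_apply, hB.eq x y, mul_comm (B x ω)]

lemma majorant_apply_self_eq {B : LinearMap.BilinForm ℝ V} (hB : B.IsSymm) {ω : V}
    (hω : B ω ω ≠ 0) (x : V) :
    majorant B ω x x =
      B (x - (B x ω / B ω ω) • ω) (x - (B x ω / B ω ω) • ω) - (B x ω / B ω ω) ^ 2 * B ω ω := by
  simp only [majorant_apply, map_sub, map_smul, LinearMap.sub_apply, LinearMap.smul_apply,
    smul_eq_mul, hB.eq ω x]
  field_simp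
  ring

lemma majorant_apply_self_pos {B : LinearMap.BilinForm ℝ V} (hB : B.IsSymm) {ω : V}
    (hω : B ω ω < 0) (hperp : ∀ w, B ω w = 0 → w ≠ 0 → 0 < B w w) {x : V} (hx : x ≠ 0) :
    0 < majorant B ω x x := by
  rw [majorant_apply_self_eq hB hω.ne]
  set c := B x ω / B ω ω
  have hωw : B ω (x - c • ω) = 0 := by
    rw [map_sub, map_smul, smul_eq_mul, hB.eq ω x, div_mul_cancel₀ _ hω.ne, sub_self]
  rcases eq_or_ne (x - c • ω) 0 with hw | hw
  · have hc : c ≠ 0 := by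
      rintro hc
      rw [hc, zero_smul, sub_zero] at hw
      exact hx hw
    simp only [hw, map_zero, zero_sub, neg_pos]
    exact mul_neg_of_pos_of_neg (by positivity) hω
  · nlinarith [hperp _ hωw hw, sq_nonneg c]

lemma majorant_apply_map {B : LinearMap.BilinForm ℝ V} {ω : V} {g : V →ₗ[ℝ] V}
    (hg : ∀ x y, B (g x) (g y) = B x y) (hgω : g ω = ω) (x y : V) :
    majorant B ω (g x) (g y) = majorant B ω x y := by
  conv_lhs => rw [← hgω]
  simp only [majorant_apply, hg]

end LinearMap.BilinForm

open LinearMap.BilinForm in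
theorem stmt_15_general {V : Type*} [AddCommGroup V] [Module ℝ V] [FiniteDimensional ℝ V]
    (B : LinearMap.BilinForm ℝ V) (hBsymm : ∀ x y : V, B x y = B y x)
    (P N : Submodule ℝ V) (hcompl : IsCompl P N)
    (hP : ∀ p ∈ P, p ≠ 0 → 0 < B p p)
    (hdimN : Module.finrank ℝ N = 1)
    {ι : Type*} (bV : Module.Basis ι ℝ V)
    (ω : V) (hω : B ω ω < 0) :
    {g : V ≃ₗ[ℝ] V |
      (∀ x y : V, B (g x) (g y) = B x y) ∧
      (⇑g '' ((Submodule.span ℤ (Set.range ⇑bV) : Submodule ℤ V) : Set V) =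
        ((Submodule.span ℤ (Set.range ⇑bV) : Submodule ℤ V) : Set V)) ∧
      g ω = ω}.Finite := by
  have hB : B.IsSymm := isSymm_def.2 hBsymm
  have hcodim : finrank ℝ V ≤ finrank ℝ P + 1 := by
    rw [← hdimN, finrank_add_eq_of_isCompl hcompl]
  have hpos : ∀ x, x ≠ 0 → 0 < majorant B ω x x := fun x =>
    majorant_apply_self_pos hB hω (fun w => apply_self_pos_of_apply_eq_zero hB hP hcodim hω)
  have : Finite ι := Module.Finite.finite_basis bV
  refine (finite_setOf_isometry_mapsTo_span (hB.majorant ω) hpos bV).subset ?_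
  rintro g ⟨hgB, hgL, hgω⟩
  exact ⟨fun x => majorant_apply_map (g := g.toLinearMap) hgB hgω x x,
    Set.mapsTo_iff_image_subset.2 hgL.subset⟩

/-- Let `V` be a finite-dimensional real Lorentzian quadratic space
(orthogonal decomposition `V = P ⊕ N` with `B` positive definite on `P`, negative
definite on `N`, `dim N = 1`), let `L` be the ℤ-span of an ℝ-basis of `V`, and let
`ω ∈ V` have negative norm. Then the set of linear automorphisms of `V` preserving
`B`, mapping `L` onto `L`, and fixing `ω` is finite. -/
theorem stmt_15 {V : Type*} [AddCommGroup V] [Module ℝ V] [FiniteDimensional ℝ V]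
    (B : LinearMap.BilinForm ℝ V) (hBsymm : ∀ x y : V, B x y = B y x)
    (P N : Submodule ℝ V) (hcompl : IsCompl P N)
    (horth : ∀ p ∈ P, ∀ q ∈ N, B p q = 0)
    (hP : ∀ p ∈ P, p ≠ 0 → 0 < B p p)
    (hN : ∀ q ∈ N, q ≠ 0 → B q q < 0)
    (hdimN : Module.finrank ℝ N = 1)
    {ι : Type*} (bV : Module.Basis ι ℝ V)
    (ω : V) (hω : B ω ω < 0) :
    {g : V ≃ₗ[ℝ] V |
      (∀ x y : V, B (g x) (g y) = B x y) ∧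
      (⇑g '' ((Submodule.span ℤ (Set.range ⇑bV) : Submodule ℤ V) : Set V) =
        ((Submodule.span ℤ (Set.range ⇑bV) : Submodule ℤ V) : Set V)) ∧
      g ω = ω}.Finite :=
  stmt_15_general B hBsymm P N hcompl hP hdimN bV ω hω
end

section
/- Let V be a finite-dimensional vector space over ℚ with a nondegenerate symmetric bilinear form b, let L ⊆ V be the ℤ-span of a ℚ-basis of V (a full lattice) with b(ℓ,ℓ') ∈ ℤ for all ℓ,ℓ' ∈ L, and let L* = {x ∈ V | b(x,ℓ) ∈ ℤ for all ℓ ∈ L} be the dual lattice. Let z ∈ L be a nonzero primitive vector (L/ℤz torsion-free) with b(z,z) = 0, and set I^⊥ = {x ∈ V | b(x,z) = 0}, K = (I^⊥ ∩ L)/ℤz, and K_ℚ = I^⊥/ℚz with the induced bilinear form b̄ (well defined since b(z,x) = 0 for x ∈ I^⊥). Then under the quotient map π : I^⊥ → K_ℚ, the image of I^⊥ ∩ L* is exactly the dual lattice {η ∈ K_ℚ | b̄(η,κ) ∈ ℤ for all κ ∈ K} of K, and the kernel of π restricted to I^⊥ ∩ L* is ℚz ∩ L*. In particular the dual lattice of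 K is isomorphic to (I^⊥ ∩ L*)/(ℚz ∩ L*). -/
/-!
The values `b l z` for `l ∈ L` form an ideal `dℤ` of `ℤ`; choosing `w ∈ L` with `b w z = d`
splits every `l ∈ L` as an element of `I^⊥ ∩ L` plus an integer multiple of `w`. So a vector
`u` that is integral on `I^⊥ ∩ L` becomes integral on all of `L` once it is corrected by the
multiple `q z` making `b (u - q z) w` integral, and such a correction does not move `π u`.
-/

theorem Submodule.exists_forall_apply_sub_zsmul_eq_zero {M : Type*} [AddCommGroup M]
    {L : Submodule ℤ M} (f : M →ₗ[ℤ] ℚ) (hf : ∀ l ∈ L, ∃ n : ℤ, f l = n) :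
    ∃ w ∈ L, ∀ l ∈ L, ∃ m : ℤ, f (l - m • w) = 0 := by
  obtain ⟨d, hd⟩ := Submodule.IsPrincipal.principal ((L.map f).comap (Algebra.linearMap ℤ ℚ))
  have hdJ : d ∈ (L.map f).comap (Algebra.linearMap ℤ ℚ) :=
    hd ▸ Submodule.mem_span_singleton_self d
  obtain ⟨w, hwL, hw⟩ := hdJ
  refine ⟨w, hwL, fun l hl => ?_⟩
  obtain ⟨n, hn⟩ := hf l hl
  have hnJ : n ∈ (L.map f).comap (Algebra.linearMap ℤ ℚ) := ⟨l, hl, hn⟩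
  obtain ⟨m, rfl⟩ := Submodule.mem_span_singleton.mp (hd ▸ hnJ)
  exact ⟨m, by simp [hn, hw]⟩

theorem exists_integral_sub_smul_of_integral_on_orthogonal {V : Type*} [AddCommGroup V]
    [Module ℚ V] (b : LinearMap.BilinForm ℚ V) (hb : ∀ x y : V, b x y = b y x)
    {L : Submodule ℤ V} {z : V} (hLz : ∀ l ∈ L, ∃ n : ℤ, b l z = n) {u : V}
    (hu : ∀ x : V, b x z = 0 → x ∈ L → ∃ n : ℤ, b u x = n) :
    ∃ q : ℚ, ∀ l ∈ L, ∃ n : ℤ, b (u - q • z) l = n := by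
  obtain ⟨w, hwL, hw⟩ :=
    Submodule.exists_forall_apply_sub_zsmul_eq_zero ((b.flip z).restrictScalars ℤ) hLz
  set q := b u w / b z w
  have hw_int : ∃ k : ℤ, b (u - q • z) w = k := by
    -- if `b z w = 0` then `q = 0` (division by zero), and `w` itself lies in `I^⊥ ∩ L`
    rcases eq_or_ne (b z w) 0 with h | h
    · simpa [q, h] using hu w (by rw [hb, h]) hwL
    · exact ⟨0, by simp [q, h]⟩
  refine ⟨q, fun l hl => ?_⟩
  obtain ⟨m, hm⟩ := hw l hl
  replace hm : b (l - m • w) z = 0 := by simpa using hm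
  obtain ⟨n, hn⟩ := hu _ hm (L.sub_mem hl (L.smul_mem m hwL))
  obtain ⟨k, hk⟩ := hw_int
  refine ⟨n + m * k, ?_⟩
  calc b (u - q • z) l = b (u - q • z) (l - m • w) + m * b (u - q • z) w := by
        simp only [map_sub, map_zsmul, zsmul_eq_mul]; ring
    _ = b u (l - m • w) - q * b z (l - m • w) + m * k := by rw [hk]; simp
    _ = ((n + m * k : ℤ) : ℚ) := by rw [hn, hb z, hm]; push_cast; ring

theorem stmt_18_general {V : Type*} [AddCommGroup V] [Module ℚ V]
    (b : LinearMap.BilinForm ℚ V) (hbsymm : ∀ x y : V, b x y = b y x)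
    (L : Submodule ℤ V)
    (hint : ∀ x ∈ L, ∀ y ∈ L, ∃ n : ℤ, b x y = (n : ℚ))
    (z : V) (hzL : z ∈ L) (hzz : b z z = 0) :
    (∀ u : V, b u z = 0 →
      ((∀ x : V, b x z = 0 → x ∈ L → ∃ n : ℤ, b u x = (n : ℚ)) ↔
        (∃ x : V, b x z = 0 ∧ (∀ l ∈ L, ∃ n : ℤ, b x l = (n : ℚ)) ∧
          ∃ q : ℚ, u = x + q • z))) ∧
    ({x : V | (b x z = 0 ∧ ∀ l ∈ L, ∃ n : ℤ, b x l = (n : ℚ)) ∧ ∃ q : ℚ, x = q • z} =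
      {x : V | (∃ q : ℚ, x = q • z) ∧ ∀ l ∈ L, ∃ n : ℤ, b x l = (n : ℚ)}) := by
  refine ⟨fun u huz => ⟨fun hu => ?_, ?_⟩, ?_⟩
  · obtain ⟨q, hq⟩ := exists_integral_sub_smul_of_integral_on_orthogonal b hbsymm
      (fun l hl => hint l hl z hzL) hu
    exact ⟨u - q • z, by simp [huz, hzz], hq, q, (sub_add_cancel u _).symm⟩
  · rintro ⟨x, -, hx, q, rfl⟩ y hyz hyL
    obtain ⟨n, hn⟩ := hx y hyL
    exact ⟨n, by simp [hn, hbsymm z y, hyz]⟩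
  · ext x
    constructor
    · rintro ⟨⟨-, hx⟩, hxz⟩
      exact ⟨hxz, hx⟩
    · rintro ⟨⟨q, rfl⟩, hx⟩
      exact ⟨⟨by simp [hzz], hx⟩, q, rfl⟩

/-- Let `V` be a finite-dimensional ℚ-vector space with a nondegenerate
symmetric bilinear form `b`, `L ⊆ V` the ℤ-span of a ℚ-basis with `b` integer valued
on `L`, and `L* = {x | b(x,L) ⊆ ℤ}` the dual lattice. Let `z ∈ L` be a nonzero
primitive isotropic vector, `I^⊥ = {x | b(x,z) = 0}`, `K = (I^⊥ ∩ L)/ℤz` inside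
`K_ℚ = I^⊥/ℚz` with induced form. Then under the quotient map `π : I^⊥ → K_ℚ`
(enccoded here via lifts: `π u = π x` iff `u = x + q·z` for some `q ∈ ℚ`), the image of
`I^⊥ ∩ L*` is exactly the dual lattice of `K`, and the kernel of `π` restricted to
`I^⊥ ∩ L*` is `ℚz ∩ L*`. -/
theorem stmt_18 {V : Type*} [AddCommGroup V] [Module ℚ V] [FiniteDimensional ℚ V]
    (b : LinearMap.BilinForm ℚ V) (hbsymm : ∀ x y : V, b x y = b y x)
    (hbnondeg : ∀ x : V, (∀ y : V, b x y = 0) → x = 0)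
    {ι : Type*} (bV : Module.Basis ι ℚ V)
    (L : Submodule ℤ V) (hL : L = Submodule.span ℤ (Set.range ⇑bV))
    (hint : ∀ x ∈ L, ∀ y ∈ L, ∃ n : ℤ, b x y = (n : ℚ))
    (z : V) (hz0 : z ≠ 0) (hzL : z ∈ L) (hzz : b z z = 0)
    (hzprim : ∀ x ∈ L, ∀ n : ℤ, n ≠ 0 →
      (∃ m : ℤ, n • x = m • z) → ∃ m : ℤ, x = m • z) :
    (∀ u : V, b u z = 0 →
      ((∀ x : V, b x z = 0 → x ∈ L → ∃ n : ℤ, b u x = (n : ℚ)) ↔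
        (∃ x : V, b x z = 0 ∧ (∀ l ∈ L, ∃ n : ℤ, b x l = (n : ℚ)) ∧
          ∃ q : ℚ, u = x + q • z))) ∧
    ({x : V | (b x z = 0 ∧ ∀ l ∈ L, ∃ n : ℤ, b x l = (n : ℚ)) ∧ ∃ q : ℚ, x = q • z} =
      {x : V | (∃ q : ℚ, x = q • z) ∧ ∀ l ∈ L, ∃ n : ℤ, b x l = (n : ℚ)}) :=
  stmt_18_general b hbsymm L hint z hzL hzz
end
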